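/- arXiv:1607.02998 — 2 statements merged into one kernel-verified Lean document; each statement's English description precedes it below -/
import Mathlib

section
/- Let $T>0$, $c>0$, and $\beta:\mathbb{R}_+\to\mathbb{R}_+$ with $\lim_{t\to 0}\beta(t)/t=0$. If $\varphi:\mathbb{R}_+\to\mathbb{R}_+$ satisfies $\varphi(t)\le (1+(t-s)c)\varphi(s)+\beta(t-s)$ for all $0\le s<t\le T$, then $\varphi(t)\le \varphi(0)e^{ct}$ for all $t\in[0,T]$. -/
open Filter Set

/-! Cut `[0, t]` into `n` equal steps of length `d = t / n`. Along the grid the hypothesis is a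
discrete Grönwall recursion with growth factor `1 + d c` and error `β d`, so
`φ t ≤ (φ 0 + n β (t / n)) e^{c t}`; the error term tends to `0` as `n → ∞` because
`β (t / n) = o(1 / n)`. -/

theorem tendsto_natCast_mul_comp_div_natCast {β : ℝ → ℝ}
    (hβ0 : Tendsto (fun x => β x / x) (nhdsWithin 0 (Ioi 0)) (nhds 0)) {t : ℝ} (ht : 0 < t) :
    Tendsto (fun n : ℕ => n * β (t / n)) atTop (nhds 0) := by
  have hgrid : Tendsto (fun n : ℕ => t / n) atTop (nhdsWithin 0 (Ioi 0)) :=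
    tendsto_nhdsWithin_of_tendsto_nhds_of_eventually_within _
      (tendsto_const_div_atTop_nhds_zero_nat t)
      (eventually_gt_atTop 0 |>.mono fun n hn => div_pos ht (Nat.cast_pos.mpr hn))
  have hlim : Tendsto (fun n : ℕ => t * (β (t / n) / (t / n))) atTop (nhds 0) := by
    simpa using (hβ0.comp hgrid).const_mul t
  refine hlim.congr' (eventually_gt_atTop 0 |>.mono fun n hn => ?_)
  have : (n : ℝ) ≠ 0 := Nat.cast_ne_zero.mpr hn.ne'
  field_simp

theorem le_mul_exp_of_step_bound {T c : ℝ} (hc : 0 ≤ c) {β φ : ℝ → ℝ}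
    (hβ : ∀ x, 0 ≤ x → 0 ≤ β x) (hφ : ∀ x, 0 ≤ x → 0 ≤ φ x)
    (h : ∀ s t, 0 ≤ s → s < t → t ≤ T → φ t ≤ (1 + (t - s) * c) * φ s + β (t - s))
    {t : ℝ} (ht : 0 < t) (htT : t ≤ T) {n : ℕ} (hn : 0 < n) :
    φ t ≤ (φ 0 + n * β (t / n)) * Real.exp (c * t) := by
  set d := t / n
  have hd0 : 0 < d := div_pos ht (Nat.cast_pos.mpr hn)
  have hnd : n * d = t := mul_div_cancel₀ t (Nat.cast_ne_zero.mpr hn.ne')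
  -- freezing the grid at its last point `t` makes the recursion hold for every index
  set u : ℕ → ℝ := fun k => φ (min k n * d) with hu
  have hstep : ∀ k ≥ 0, u (k + 1) ≤ (1 + d * c) * u k + β d := by
    intro k _
    rcases lt_or_ge k n with hk | hk
    · have hkn : ((k + 1 : ℕ) : ℝ) ≤ n := Nat.cast_le.mpr hk
      have := h (k * d) ((k + 1 : ℕ) * d) (by positivity) (by push_cast; linarith)
        (by nlinarith)
      simp only [hu, min_eq_left hk.nat_succ_le, min_eq_left hk.le]
      simpa [add_mul] using this
    · have hφt := hφ t ht.le
      have hβd := hβ d hd0.le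
      simp only [hu, min_eq_right hk, min_eq_right (hk.trans k.le_succ), hnd]
      nlinarith [mul_nonneg (mul_nonneg hd0.le hc) hφt]
  have := discrete_gronwall (u := u) (c := fun _ => d * c) (b := fun _ => β d)
    (by simpa [hu] using hφ 0 le_rfl) hstep (fun _ _ => by positivity)
    (fun _ _ => hβ d hd0.le) (Nat.zero_le n)
  simpa [hu, hnd, ← mul_assoc, mul_comm c] using this

theorem gronwall_with_perturbation_general
    (T c : ℝ) (hc : 0 < c)
    (β : ℝ → ℝ) (hβ : ∀ t, 0 ≤ t → 0 ≤ β t)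
    (hβ0 : Tendsto (fun t => β t / t) (nhdsWithin 0 (Ioi 0)) (nhds 0))
    (φ : ℝ → ℝ) (hφ : ∀ t, 0 ≤ t → 0 ≤ φ t)
    (h : ∀ s t, 0 ≤ s → s < t → t ≤ T → φ t ≤ (1 + (t - s) * c) * φ s + β (t - s)) :
    ∀ t ∈ Icc 0 T, φ t ≤ φ 0 * Real.exp (c * t) := by
  rintro t ⟨ht0, htT⟩
  rcases ht0.eq_or_lt with rfl | ht
  · simp
  have hlim : Tendsto (fun n : ℕ => (φ 0 + n * β (t / n)) * Real.exp (c * t)) atTop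
      (nhds ((φ 0 + 0) * Real.exp (c * t))) :=
    (tendsto_const_nhds.add (tendsto_natCast_mul_comp_div_natCast hβ0 ht)).mul_const _
  simpa using ge_of_tendsto hlim ((eventually_gt_atTop 0).mono fun n hn =>
    le_mul_exp_of_step_bound hc.le hβ hφ h ht htT hn)

/-- Grönwall-type lemma with perturbation: if `φ(t) ≤ (1+(t-s)c) φ(s) + β(t-s)` for all
`0 ≤ s < t ≤ T`, where `β(t)/t → 0` as `t → 0`, then `φ(t) ≤ φ(0) e^{c t}` on `[0, T]`. -/
theorem gronwall_with_perturbation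
    (T c : ℝ) (hT : 0 < T) (hc : 0 < c)
    (β : ℝ → ℝ) (hβ : ∀ t, 0 ≤ t → 0 ≤ β t)
    (hβ0 : Tendsto (fun t => β t / t) (nhdsWithin 0 (Ioi 0)) (nhds 0))
    (φ : ℝ → ℝ) (hφ : ∀ t, 0 ≤ t → 0 ≤ φ t)
    (h : ∀ s t, 0 ≤ s → s < t → t ≤ T → φ t ≤ (1 + (t - s) * c) * φ s + β (t - s)) :
    ∀ t ∈ Icc 0 T, φ t ≤ φ 0 * Real.exp (c * t) :=
  gronwall_with_perturbation_general T c hc β hβ hβ0 φ hφ h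
end

section
/- Let $a\in\mathbb{R}^d$, $z\in\mathbb{C}$ and $\mu=z(\delta_a-\delta_{-a})$. Then the total variation measure of the convolution exponential $\exp(\mu)$ is symmetric: $|\exp(\mu)|(A)=|\exp(\mu)|(-A)$ for all Borel sets $A$. -/
open MeasureTheory ENNReal Classical
noncomputable section

/-- Integral of a complex-valued function against a complex measure. -/
def cintegral {α : Type*} [MeasurableSpace α] (μ : ComplexMeasure α) (f : α → ℂ) : ℂ :=
  ((∫ x, f x ∂(ComplexMeasure.re μ).toJordanDecomposition.posPart) -
    (∫ x, f x ∂(ComplexMeasure.re μ).toJordanDecomposition.negPart)) +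
  Complex.I * ((∫ x, f x ∂(ComplexMeasure.im μ).toJordanDecomposition.posPart) -
    (∫ x, f x ∂(ComplexMeasure.im μ).toJordanDecomposition.negPart))

/-- Total variation of a complex measure, defined via suprema over finite
decompositions of a set into pairwise disjoint measurable pieces. -/
def tv {α : Type*} [MeasurableSpace α] (μ : ComplexMeasure α) (A : Set α) : ℝ≥0∞ :=
  ⨆ (n : ℕ) (B : Fin n → Set α) (_ : ∀ i, MeasurableSet (B i))
    (_ : Pairwise (Function.onFun Disjoint B)) (_ : (⋃ i, B i) = A),
    ∑ i, ENNReal.ofReal ‖μ (B i)‖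

/-!
Reflection multiplies the `n`-th convolution power `P n` of `μ` by `(-1) ^ n`, and `P n` lives on
the multiples `k • a` with `k ≡ n [ZMOD 2]`. Hence off the odd multiples of `a` only the even powers
contribute (`exp μ = cosh μ` there) and `exp μ` is reflection invariant, while on the odd multiples
only the odd powers contribute (`exp μ = sinh μ`) and reflection flips its sign (if `a = 0`, then
`μ = 0` and the odd powers vanish altogether). Refining any partition along the odd multiples
thus shows that reflection cannot decrease the total variation; as it is an involution, it
preserves it.
-/

section Partition

variable {α : Type*} [MeasurableSpace α]

structure IsMeasurablePartition {ι : Type*} (B : ι → Set α) (A : Set α) : Prop where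
  measurableSet : ∀ i, MeasurableSet (B i)
  pairwiseDisjoint : Pairwise (Function.onFun Disjoint B)
  iUnion_eq : ⋃ i, B i = A

namespace IsMeasurablePartition

variable {ι κ : Type*} {B : ι → Set α} {A : Set α}

lemma comp_equiv (hB : IsMeasurablePartition B A) (e : κ ≃ ι) :
    IsMeasurablePartition (B ∘ e) A where
  measurableSet k := hB.measurableSet (e k)
  pairwiseDisjoint := hB.pairwiseDisjoint.comp_of_injective e.injective
  iUnion_eq := (e.iSup_comp (g := B)).trans hB.iUnion_eq

lemma preimage {β : Type*} [MeasurableSpace β] (hB : IsMeasurablePartition B A) {f : β → α}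
    (hf : Measurable f) : IsMeasurablePartition (fun i ↦ f ⁻¹' B i) (f ⁻¹' A) where
  measurableSet i := hf (hB.measurableSet i)
  pairwiseDisjoint _ _ hij := (hB.pairwiseDisjoint hij).preimage f
  iUnion_eq := by rw [← Set.preimage_iUnion, hB.iUnion_eq]

lemma inter_left {S : κ → Set α} (hS : IsMeasurablePartition S Set.univ) (hA : MeasurableSet A) :
    IsMeasurablePartition (fun k ↦ A ∩ S k) A where
  measurableSet k := hA.inter (hS.measurableSet k)
  pairwiseDisjoint _ _ hkl :=
    (hS.pairwiseDisjoint hkl).mono Set.inter_subset_right Set.inter_subset_right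
  iUnion_eq := by rw [← Set.inter_iUnion, hS.iUnion_eq, Set.inter_univ]

lemma prod_inter (hB : IsMeasurablePartition B A) {S : κ → Set α}
    (hS : IsMeasurablePartition S Set.univ) :
    IsMeasurablePartition (fun p : ι × κ ↦ B p.1 ∩ S p.2) A where
  measurableSet p := (hB.measurableSet p.1).inter (hS.measurableSet p.2)
  pairwiseDisjoint := by
    rintro ⟨i, k⟩ ⟨j, l⟩ hne
    rcases eq_or_ne i j with rfl | hij
    · exact (inter_left hS (hB.measurableSet i)).pairwiseDisjoint fun hkl ↦ hne (Prod.ext rfl hkl)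
    · exact (hB.pairwiseDisjoint hij).mono Set.inter_subset_left Set.inter_subset_left
  iUnion_eq := by
    simp_rw [Set.iUnion_prod', (inter_left hS (hB.measurableSet _)).iUnion_eq, hB.iUnion_eq]

lemma apply_eq_sum [Fintype ι] (hB : IsMeasurablePartition B A) (ν : ComplexMeasure α) :
    ν A = ∑ i, ν (B i) := by
  rw [← hB.iUnion_eq, VectorMeasure.of_disjoint_iUnion hB.measurableSet hB.pairwiseDisjoint,
    tsum_fintype]

end IsMeasurablePartition

lemma isMeasurablePartition_cond {O : Set α} (hO : MeasurableSet O) :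
    IsMeasurablePartition (fun b : Bool ↦ cond b O Oᶜ) Set.univ where
  measurableSet b := by cases b <;> simp [hO]
  pairwiseDisjoint := by
    rintro (_ | _) (_ | _) h <;>
      simp_all [Function.onFun, disjoint_compl_left, disjoint_compl_right]
  iUnion_eq := by simp [Set.iUnion, iSup_bool_eq]

end Partition

section TotalVariation

variable {α : Type*} [MeasurableSpace α] {ν : ComplexMeasure α} {A : Set α}

lemma sum_le_tv {ι : Type*} [Fintype ι] {B : ι → Set α} (hB : IsMeasurablePartition B A) :
    ∑ i, ENNReal.ofReal ‖ν (B i)‖ ≤ tv ν A := by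
  have e := Fintype.equivFin ι
  obtain ⟨hm, hd, hu⟩ := hB.comp_equiv e.symm
  rw [← e.symm.sum_comp]
  exact le_iSup_of_le _ <| le_iSup_of_le _ <| le_iSup_of_le hm <| le_iSup_of_le hd <|
    le_iSup_of_le hu le_rfl

lemma tv_le_of_forall {c : ℝ≥0∞} (h : ∀ (n : ℕ) (B : Fin n → Set α),
      IsMeasurablePartition B A → ∑ i, ENNReal.ofReal ‖ν (B i)‖ ≤ c) :
    tv ν A ≤ c :=
  iSup_le fun n ↦ iSup_le fun B ↦ iSup_le fun hm ↦ iSup_le fun hd ↦ iSup_le fun hu ↦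
    h n B ⟨hm, hd, hu⟩

lemma tv_le_tv_preimage {f : α → α} (hf : Measurable f) {κ : Type*} [Fintype κ]
    {S : κ → Set α} (hS : IsMeasurablePartition S Set.univ)
    (hν : ∀ k B, MeasurableSet B → B ⊆ S k → ‖ν B‖ ≤ ‖ν (f ⁻¹' B)‖) (A : Set α) :
    tv ν A ≤ tv ν (f ⁻¹' A) := by
  refine tv_le_of_forall fun n B hB ↦ ?_
  have hBS (i : Fin n) := hS.inter_left (hB.measurableSet i)
  calc ∑ i, ENNReal.ofReal ‖ν (B i)‖
      ≤ ∑ i, ∑ k, ENNReal.ofReal ‖ν (B i ∩ S k)‖ := by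
        gcongr with i
        rw [(hBS i).apply_eq_sum ν, ← ENNReal.ofReal_sum_of_nonneg fun _ _ ↦ norm_nonneg _]
        exact ENNReal.ofReal_le_ofReal (norm_sum_le _ _)
    _ ≤ ∑ i, ∑ k, ENNReal.ofReal ‖ν (f ⁻¹' (B i ∩ S k))‖ := by
        gcongr with i _ k
        exact hν k _ ((hBS i).measurableSet k) Set.inter_subset_right
    _ = ∑ p : Fin n × κ, ENNReal.ofReal ‖ν (f ⁻¹' (B p.1 ∩ S p.2))‖ :=
        (Fintype.sum_prod_type' _).symm
    _ ≤ tv ν (f ⁻¹' A) := sum_le_tv ((hB.prod_inter hS).preimage hf)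

lemma tv_preimage_eq {f : α → α} (hf : Measurable f) (hinv : Function.Involutive f)
    {κ : Type*} [Fintype κ] {S : κ → Set α} (hS : IsMeasurablePartition S Set.univ)
    (hν : ∀ k B, MeasurableSet B → B ⊆ S k → ‖ν B‖ ≤ ‖ν (f ⁻¹' B)‖) (A : Set α) :
    tv ν (f ⁻¹' A) = tv ν A := by
  refine le_antisymm ?_ (tv_le_tv_preimage hf hS hν A)
  simpa only [hinv.preimage A] using tv_le_tv_preimage hf hS hν (f ⁻¹' A)

end TotalVariation

section Dirac

variable {α : Type*} [MeasurableSpace α]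

def jordanIntegral (s : SignedMeasure α) (f : α → ℂ) : ℂ :=
  (∫ x, f x ∂s.toJordanDecomposition.posPart) - ∫ x, f x ∂s.toJordanDecomposition.negPart

variable [MeasurableSingletonClass α]

lemma jordanIntegral_of_nonneg {a b : α} (hab : a ≠ b) {r : ℝ} (hr : 0 ≤ r) {s : SignedMeasure α}
    (hs : ∀ A, MeasurableSet A → s A = r * ((if a ∈ A then 1 else 0) - (if b ∈ A then 1 else 0)))
    (f : α → ℂ) :
    jordanIntegral s f = r * (f a - f b) := by
  have hdirac : Measure.dirac a ⟂ₘ Measure.dirac b :=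
    ⟨{a}ᶜ, (measurableSet_singleton a).compl, by simp, by simp [hab.symm]⟩
  have hsingular : r.toNNReal • Measure.dirac a ⟂ₘ r.toNNReal • Measure.dirac b :=
    ((hdirac.smul_nnreal _).symm.smul_nnreal _).symm
  let j : JordanDecomposition α :=
    { posPart := r.toNNReal • Measure.dirac a, negPart := r.toNNReal • Measure.dirac b,
      mutuallySingular := hsingular }
  have hj : s.toJordanDecomposition = j := by
    refine JordanDecomposition.toSignedMeasure_injective ?_
    ext A hA
    rw [SignedMeasure.toSignedMeasure_toJordanDecomposition, hs A hA,
      JordanDecomposition.toSignedMeasure, sub_apply,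
      Measure.toSignedMeasure_apply_measurable hA, Measure.toSignedMeasure_apply_measurable hA]
    simp only [j, Measure.real, Measure.smul_apply, Measure.dirac_apply' _ hA, Set.indicator]
    split_ifs <;> simp [hr]
  rw [jordanIntegral, hj]
  simp [j, integral_smul_nnreal_measure, NNReal.smul_def, hr, mul_sub]

lemma jordanIntegral_of_apply_eq {a b : α} {r : ℝ} {s : SignedMeasure α}
    (hs : ∀ A, MeasurableSet A → s A = r * ((if a ∈ A then 1 else 0) - (if b ∈ A then 1 else 0)))
    (f : α → ℂ) :
    jordanIntegral s f = r * (f a - f b) := by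
  rcases eq_or_ne a b with rfl | hab
  · have hs0 : s = 0 := by ext A hA; simp [hs A hA]
    simp [jordanIntegral, hs0, SignedMeasure.toJordanDecomposition_zero]
  rcases le_total 0 r with hr | hr
  · exact jordanIntegral_of_nonneg hab hr hs f
  · rw [jordanIntegral_of_nonneg hab.symm (neg_nonneg.2 hr) (fun A hA ↦ by rw [hs A hA]; ring) f]
    push_cast
    ring

lemma cintegral_of_apply_eq {a b : α} {z : ℂ} {μ : ComplexMeasure α}
    (hμ : ∀ A, MeasurableSet A → μ A = z * ((if a ∈ A then 1 else 0) - (if b ∈ A then 1 else 0)))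
    (f : α → ℂ) :
    cintegral μ f = z * (f a - f b) := by
  have hre (A) (hA : MeasurableSet A) : ComplexMeasure.re μ A =
      z.re * ((if a ∈ A then 1 else 0) - (if b ∈ A then 1 else 0)) := by
    change (μ A).re = _
    rw [hμ A hA]
    split_ifs <;> simp
  have him (A) (hA : MeasurableSet A) : ComplexMeasure.im μ A =
      z.im * ((if a ∈ A then 1 else 0) - (if b ∈ A then 1 else 0)) := by
    change (μ A).im = _
    rw [hμ A hA]
    split_ifs <;> simp
  rw [cintegral, ← jordanIntegral, ← jordanIntegral, jordanIntegral_of_apply_eq hre,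
    jordanIntegral_of_apply_eq him]
  conv_rhs => rw [← Complex.re_add_im z]
  ring

end Dirac

section

variable {E : Type*} [AddCommGroup E] [MeasurableSpace E]

/-- `P n` is the `n`-th convolution power of `z (δ_a - δ_{-a})`. -/
structure DipolePowers (P : ℕ → ComplexMeasure E) (z : ℂ) (a : E) : Prop where
  zero : ∀ A, MeasurableSet A → P 0 A = if 0 ∈ A then 1 else 0
  succ : ∀ n A, MeasurableSet A →
    P (n + 1) A = z * (P n ((· + a) ⁻¹' A) - P n ((· + -a) ⁻¹' A))

namespace DipolePowers

variable [MeasurableAdd E] {P : ℕ → ComplexMeasure E} {z : ℂ} {a : E}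

lemma apply_neg_preimage [MeasurableNeg E] (hP : DipolePowers P z a) (n : ℕ) {A : Set E}
    (hA : MeasurableSet A) : P n (Neg.neg ⁻¹' A) = (-1) ^ n * P n A := by
  induction n generalizing A with
  | zero =>
    rw [hP.zero _ (measurable_neg hA), hP.zero A hA]
    simp
  | succ n ih =>
    have hcomm (b : E) : (· + b) ⁻¹' (Neg.neg ⁻¹' A) = Neg.neg ⁻¹' ((· + -b) ⁻¹' A) := by
      ext y
      simp [add_comm]
    rw [hP.succ n _ (measurable_neg hA), hcomm, hcomm, neg_neg,
      ih (measurable_add_const _ hA), ih (measurable_add_const _ hA), hP.succ n A hA]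
    ring

lemma apply_eq_zero_of_forall_notMem (hP : DipolePowers P z a) (n : ℕ) {A : Set E}
    (hA : MeasurableSet A) (h : ∀ k : ℤ, (Even k ↔ Even n) → k • a ∉ A) : P n A = 0 := by
  induction n generalizing A with
  | zero => simpa [hP.zero A hA] using h 0
  | succ n ih =>
    rw [hP.succ n A hA, ih (measurable_add_const _ hA), ih (measurable_add_const _ hA), sub_self,
      mul_zero]
    · intro k hk
      rw [Set.mem_preimage, ← sub_one_zsmul]
      exact h (k - 1) (by rw [Int.even_sub_one, Nat.even_add_one, hk])
    · intro k hk
      rw [Set.mem_preimage, ← add_one_zsmul]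
      exact h (k + 1) (by rw [Int.even_add_one, Nat.even_add_one, hk])

lemma apply_neg_preimage_of_forall_even [MeasurableNeg E] (hP : DipolePowers P z a) {B : Set E}
    (hB : MeasurableSet B) (h : ∀ n, Even n → P n B = 0) (n : ℕ) :
    P n (Neg.neg ⁻¹' B) = -1 * P n B := by
  rw [hP.apply_neg_preimage n hB]
  rcases n.even_or_odd with hn | hn
  · simp [h n hn]
  · rw [hn.neg_one_pow]

lemma apply_neg_preimage_of_forall_odd [MeasurableNeg E] (hP : DipolePowers P z a) {B : Set E}
    (hB : MeasurableSet B) (h : ∀ n, Odd n → P n B = 0) (n : ℕ) :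
    P n (Neg.neg ⁻¹' B) = 1 * P n B := by
  rw [hP.apply_neg_preimage n hB]
  rcases n.even_or_odd with hn | hn
  · rw [hn.neg_one_pow]
  · simp [h n hn]

lemma exists_parity_support [MeasurableSingletonClass E] [IsAddTorsionFree E]
    (hP : DipolePowers P z a) :
    ∃ O : Set E, MeasurableSet O ∧
      (∀ n, Even n → ∀ B ⊆ O, MeasurableSet B → P n B = 0) ∧
      (∀ n, Odd n → ∀ B ⊆ Oᶜ, MeasurableSet B → P n B = 0) := by
  rcases eq_or_ne a 0 with rfl | ha
  · refine ⟨∅, .empty, fun n _ B hB _ ↦ by rw [Set.subset_empty_iff.1 hB, VectorMeasure.empty],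
      fun n hn B _ hB ↦ ?_⟩
    obtain ⟨m, rfl⟩ := hn
    rw [hP.succ _ B hB, neg_zero, sub_self, mul_zero]
  refine ⟨(· • a) '' {k : ℤ | Odd k}, ((Set.to_countable _).image _).measurableSet,
    fun n hn B hBO hB ↦ hP.apply_eq_zero_of_forall_notMem n hB fun k hk hkB ↦ ?_,
    fun n hn B hBO hB ↦ hP.apply_eq_zero_of_forall_notMem n hB fun k hk hkB ↦ ?_⟩
  · obtain ⟨j, hj, hja⟩ := hBO hkB
    rw [smul_left_inj ha] at hja
    exact Int.not_even_iff_odd.2 hj (hja ▸ hk.2 hn)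
  · exact hBO hkB ⟨k, Int.not_even_iff_odd.1 fun hk' ↦ Nat.not_even_iff_odd.2 hn (hk.1 hk'), rfl⟩

end DipolePowers

end

lemma apply_eq_mul_of_forall_apply_eq_mul {α : Type*} [MeasurableSpace α]
    {P : ℕ → ComplexMeasure α} {ν : ComplexMeasure α}
    (hν : ∀ A, MeasurableSet A → ν A = ∑' n : ℕ, P n A / (n.factorial : ℂ))
    {B B' : Set α} (hB : MeasurableSet B) (hB' : MeasurableSet B') {c : ℂ}
    (h : ∀ n, P n B' = c * P n B) : ν B' = c * ν B := by
  simp_rw [hν B hB, hν B' hB', h, ← tsum_mul_left, mul_div_assoc]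

/-- For `μ = z (δ_a - δ_{-a})`, the total variation of the convolution exponential
`exp(μ) = ∑ μ^{*n}/n!` is a symmetric measure. -/
theorem tv_exp_symmetric {d : ℕ} (a : EuclideanSpace ℝ (Fin d)) (z : ℂ)
    (μ : ComplexMeasure (EuclideanSpace ℝ (Fin d)))
    (hμ : ∀ A : Set (EuclideanSpace ℝ (Fin d)), MeasurableSet A →
      μ A = z * ((if a ∈ A then 1 else 0) - (if -a ∈ A then 1 else 0)))
    (P : ℕ → ComplexMeasure (EuclideanSpace ℝ (Fin d)))
    (hP0 : ∀ A, MeasurableSet A →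
      P 0 A = if (0 : EuclideanSpace ℝ (Fin d)) ∈ A then 1 else 0)
    (hPrec : ∀ n, ∀ A, MeasurableSet A →
      P (n + 1) A = cintegral μ (fun x => P n {y | y + x ∈ A}))
    (expμ : ComplexMeasure (EuclideanSpace ℝ (Fin d)))
    (hexp : ∀ A, MeasurableSet A → expμ A = ∑' n : ℕ, P n A / (n.factorial : ℂ)) :
    ∀ A : Set (EuclideanSpace ℝ (Fin d)), MeasurableSet A →
      tv expμ A = tv expμ (Neg.neg ⁻¹' A) := by
  have : IsAddTorsionFree (EuclideanSpace ℝ (Fin d)) := .of_isTorsionFree ℝ _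
  have hP : DipolePowers P z a :=
    ⟨hP0, fun n A hA ↦ (hPrec n A hA).trans (cintegral_of_apply_eq hμ _)⟩
  obtain ⟨O, hO, hEven, hOdd⟩ := hP.exists_parity_support
  have hsymm : ∀ b B, MeasurableSet B → B ⊆ cond b O Oᶜ →
      ‖expμ B‖ ≤ ‖expμ (Neg.neg ⁻¹' B)‖ := by
    rintro (_ | _) B hB hBO
    · rw [apply_eq_mul_of_forall_apply_eq_mul hexp hB (measurable_neg hB)
        (hP.apply_neg_preimage_of_forall_odd hB fun n hn ↦ hOdd n hn B hBO hB), one_mul]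
    · rw [apply_eq_mul_of_forall_apply_eq_mul hexp hB (measurable_neg hB)
        (hP.apply_neg_preimage_of_forall_even hB fun n hn ↦ hEven n hn B hBO hB), neg_one_mul,
        norm_neg]
  intro A _
  exact (tv_preimage_eq measurable_neg neg_involutive (isMeasurablePartition_cond hO) hsymm A).symm

end
end
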